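/- Let A be a prefix-free, left-total set of finite binary strings, and let b be a nonempty finite binary string such that b is total with respect to A and b⁻ (b with its last bit removed) is not total with respect to A. Then b⁻ has both a total extension and a non-total extension with respect to A; moreover, for every infinite binary sequence α with the property that each finite prefix of α has both a total extension and a non-total extension with respect to A, b⁻ is a prefix of α. -/

import Mathlib

/-- The first `n` bits of an infinite binary sequence, as a finite string. -/
def firstN (α : ℕ → Bool) (n : ℕ) : List Bool := List.ofFn fun i : Fin n => α i

/-- A set of finite binary strings is prefix-free if no element is a proper prefix
of another element. -/
def PrefixFree (A : Set (List Bool)) : Prop :=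
  ∀ x ∈ A, ∀ y ∈ A, x <+: y → x = y

/-- `x` is total with respect to `A` if every infinite binary sequence extending `x`
has some finite prefix belonging to `A`. -/
def TotalFor (A : Set (List Bool)) (x : List Bool) : Prop :=
  ∀ α : ℕ → Bool, (∀ i : Fin x.length, α i = x.get i) → ∃ n : ℕ, firstN α n ∈ A

/-- `x` is to the left of `y`: some `z ++ [false]` is a prefix of `x` while
`z ++ [true]` is a prefix of `y`. -/
def LeftOf (x y : List Bool) : Prop :=
  ∃ z : List Bool, z ++ [false] <+: x ∧ z ++ [true] <+: y

/-- `A` is left-total if every finite string to the left of some element of `A`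
is total with respect to `A`. -/
def LeftTotal (A : Set (List Bool)) : Prop :=
  ∀ x y : List Bool, y ∈ A → LeftOf x y → TotalFor A x

/-!
Two distinct strings of equal length are comparable in the left-of order `⋖`, and in a
left-total set `⋖` carries totality leftwards: if `x ⋖ y` and `y` is total, run the sequence
`y ++ 000…` until it meets `A`; either it meets `A` before the branching point, and then `x` is
total trivially, or the element it meets lies to the right of `x`.

Now let `p` be the prefix of `α` of length `|b⁻|`. If `p ⋖ b⁻` then `p ⋖ b`, so `p` and all its
extensions are total; if `b⁻ ⋖ p` then `b⁻` lies to the left of a total extension of `p`, so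
`b⁻` is total. Both contradict the hypotheses, hence `p = b⁻`.
-/

@[simp]
lemma firstN_length (α : ℕ → Bool) (n : ℕ) : (firstN α n).length = n := by
  simp [firstN]

lemma firstN_succ (α : ℕ → Bool) (n : ℕ) : firstN α (n + 1) = firstN α n ++ [α n] := by
  rw [firstN, firstN, List.ofFn_succ', List.concat_eq_append]
  rfl

lemma firstN_prefix_firstN (α : ℕ → Bool) {m n : ℕ} (h : m ≤ n) : firstN α m <+: firstN α n := by
  induction n, h using Nat.le_induction with
  | base => exact List.prefix_rfl
  | succ n _ ih => exact ih.trans (firstN_succ α n ▸ List.prefix_append _ _)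

lemma firstN_length_eq_iff {α : ℕ → Bool} {x : List Bool} :
    firstN α x.length = x ↔ ∀ i : Fin x.length, α i = x.get i := by
  conv_lhs => rhs; rw [← List.ofFn_get x]
  rw [firstN, List.ofFn_inj, funext_iff]

lemma prefix_firstN_of_agree {α : ℕ → Bool} {x : List Bool}
    (h : ∀ i : Fin x.length, α i = x.get i) {n : ℕ} (hn : x.length ≤ n) : x <+: firstN α n :=
  firstN_length_eq_iff.2 h ▸ firstN_prefix_firstN α hn

lemma agree_getD (x : List Bool) : ∀ i : Fin x.length, x.getD i false = x.get i := by
  simp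

namespace TotalFor

variable {A : Set (List Bool)} {x y : List Bool}

lemma mono (hx : TotalFor A x) (hxy : x <+: y) : TotalFor A y := fun α hα =>
  hx α fun i => by
    have := hα ⟨i, i.2.trans_le hxy.length_le⟩
    simp_all [List.IsPrefix.getElem hxy]

end TotalFor

lemma totalFor_of_mem {A : Set (List Bool)} {a : List Bool} (ha : a ∈ A) : TotalFor A a :=
  fun _ hα => ⟨a.length, by rwa [firstN_length_eq_iff.2 hα]⟩

namespace LeftOf

variable {x y y' : List Bool}

lemma mono_right (h : LeftOf x y) (hy : y <+: y') : LeftOf x y' :=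
  let ⟨z, hzx, hzy⟩ := h
  ⟨z, hzx, hzy.trans hy⟩

lemma cons (a : Bool) (h : LeftOf x y) : LeftOf (a :: x) (a :: y) :=
  let ⟨z, hzx, hzy⟩ := h
  ⟨a :: z, (List.prefix_cons_inj a).2 hzx, (List.prefix_cons_inj a).2 hzy⟩

end LeftOf

lemma leftOf_or_leftOf_of_length_eq {x y : List Bool} (hlen : x.length = y.length) (hne : x ≠ y) :
    LeftOf x y ∨ LeftOf y x := by
  induction x generalizing y with
  | nil => exact absurd (List.length_eq_zero_iff.1 hlen.symm).symm hne
  | cons a x ih =>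
    obtain _ | ⟨c, y⟩ := y
    · simp at hlen
    by_cases hac : a = c
    · subst hac
      exact (ih (by simpa using hlen) fun h => hne (h ▸ rfl)).imp (·.cons a) (·.cons a)
    · obtain rfl : c = !a := by cases a <;> cases c <;> simp_all
      cases a
      · exact .inl ⟨[], by simp, by simp⟩
      · exact .inr ⟨[], by simp, by simp⟩

lemma LeftTotal.totalFor_of_leftOf {A : Set (List Bool)} (hA : LeftTotal A) {x y : List Bool}
    (hy : TotalFor A y) (hxy : LeftOf x y) : TotalFor A x := by
  obtain ⟨z, hzx, hzy⟩ := hxy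
  set β : ℕ → Bool := fun i => y.getD i false
  obtain ⟨n, hn⟩ := hy β (agree_getD y)
  have hyβ : y <+: firstN β (max n y.length) := prefix_firstN_of_agree (agree_getD y) le_sup_right
  have hnβ : firstN β n <+: firstN β (max n y.length) := firstN_prefix_firstN β le_sup_left
  rcases le_or_gt n z.length with hnz | hzn
  · have hzβ : z <+: firstN β (max n y.length) :=
      (List.prefix_append z [true]).trans (hzy.trans hyβ)
    have hnz' : firstN β n <+: z := List.prefix_of_prefix_length_le hnβ hzβ (by simpa using hnz)
    exact (totalFor_of_mem hn).mono (hnz'.trans ((List.prefix_append z [false]).trans hzx))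
  · have hzβ : z ++ [true] <+: firstN β n :=
      List.prefix_of_prefix_length_le (hzy.trans hyβ) hnβ (by simpa using hzn)
    exact hA x _ hn ⟨z, hzx, hzβ⟩

theorem stmt_11_general
    (A : Set (List Bool)) (hlt : LeftTotal A)
    (b : List Bool)
    (hbtot : TotalFor A b) (hbpre : ¬TotalFor A b.dropLast) :
    ((∃ e : List Bool, b.dropLast <+: e ∧ TotalFor A e) ∧
      (∃ e : List Bool, b.dropLast <+: e ∧ ¬TotalFor A e)) ∧
    ∀ α : ℕ → Bool,
      (∀ n : ℕ, (∃ e : List Bool, firstN α n <+: e ∧ TotalFor A e) ∧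
        (∃ e : List Bool, firstN α n <+: e ∧ ¬TotalFor A e)) →
      ∀ i : Fin b.dropLast.length, α i = b.dropLast.get i := by
  refine ⟨⟨⟨b, b.dropLast_prefix, hbtot⟩, ⟨b.dropLast, List.prefix_rfl, hbpre⟩⟩, fun α hα => ?_⟩
  refine firstN_length_eq_iff.1 (by_contra fun hne => ?_)
  obtain ⟨⟨e, hpe, he⟩, ⟨e', hpe', he'⟩⟩ := hα b.dropLast.length
  rcases leftOf_or_leftOf_of_length_eq (by simp) hne with hleft | hleft
  · exact he' ((hlt.totalFor_of_leftOf hbtot (hleft.mono_right b.dropLast_prefix)).mono hpe')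
  · exact hbpre (hlt.totalFor_of_leftOf he (hleft.mono_right hpe))

theorem stmt_11
    (A : Set (List Bool)) (hpf : PrefixFree A) (hlt : LeftTotal A)
    (b : List Bool) (hb : b ≠ [])
    (hbtot : TotalFor A b) (hbpre : ¬TotalFor A b.dropLast) :
    ((∃ e : List Bool, b.dropLast <+: e ∧ TotalFor A e) ∧
      (∃ e : List Bool, b.dropLast <+: e ∧ ¬TotalFor A e)) ∧
    ∀ α : ℕ → Bool,
      (∀ n : ℕ, (∃ e : List Bool, firstN α n <+: e ∧ TotalFor A e) ∧
        (∃ e : List Bool, firstN α n <+: e ∧ ¬TotalFor A e)) →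
      ∀ i : Fin b.dropLast.length, α i = b.dropLast.get i :=
  stmt_11_general A hlt b hbtot hbpre
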